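/- Let 0 < μ₂ < μ₁ < 1 and let θ_a = log(μ_a/(1−μ_a)) for a = 1, 2, with m(θ) = 1/(1+exp(−θ)). For α ∈ [0,1] define g(α) = α·d(m(αθ₁+(1−α)θ₂), μ₁) + (1−α)·d(m(αθ₁+(1−α)θ₂), μ₂). Let m* ∈ (μ₂, μ₁) satisfy d(m*, μ₁) = d(m*, μ₂), let θ* = log(m*/(1−m*)), and set α* = (θ* − θ₂)/(θ₁ − θ₂). Then α* ∈ (0,1), g(α*) = d(m*, μ₁), and for every α ∈ [0,1], g(α) ≤ g(α*). -/

import Mathlib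

/-- The Kullback-Leibler divergence between Bernoulli distributions of
parameters `x` and `y`. -/
noncomputable def klBernoulli (x y : ℝ) : ℝ :=
  x * Real.log (x / y) + (1 - x) * Real.log ((1 - x) / (1 - y))

/-!
In the natural parameter `θ`, the Bernoulli family has mean `sigmoid θ` and log-partition
function `A = softplus`, and `d(sigmoid θ, sigmoid η)` is the Bregman divergence
`A η - A θ - (η - θ) sigmoid θ` of `A`. Consequently
`g α = α A θ₁ + (1 - α) A θ₂ - A (α θ₁ + (1 - α) θ₂)`, and the equation `d(m*, μ₁) = d(m*, μ₂)`
says `A θ₁ - A θ₂ = (θ₁ - θ₂) m*`. With this, `g α + d(m*, m(α θ₁ + (1 - α) θ₂)) = g α*`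
for every `α`: since `g 1 = 0`, the case `α = 1` gives `g α* = d(m*, μ₁)`, and the maximality
is Gibbs' inequality `d ≥ 0`.
-/

open Real

noncomputable def softplus (θ : ℝ) : ℝ := log (1 + exp θ)

lemma log_sigmoid_neg (θ : ℝ) : log (sigmoid (-θ)) = -softplus θ := by
  rw [sigmoid_def, neg_neg, log_inv, softplus]

lemma log_sigmoid (θ : ℝ) : log (sigmoid θ) = θ - softplus θ := by
  have h := sigmoid_mul_rexp_neg (-θ)
  rw [neg_neg] at h
  rw [← h, log_mul (sigmoid_pos _).ne' (exp_pos θ).ne', log_exp, log_sigmoid_neg]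
  ring

lemma log_one_sub_sigmoid (θ : ℝ) : log (1 - sigmoid θ) = -softplus θ := by
  rw [← sigmoid_neg, log_sigmoid_neg]

lemma sigmoid_log_div_one_sub {x : ℝ} (h₀ : 0 < x) (h₁ : x < 1) :
    sigmoid (log (x / (1 - x))) = x := by
  have : 0 < 1 - x := sub_pos.2 h₁
  rw [sigmoid_def, exp_neg, exp_log (div_pos h₀ this)]
  field_simp
  ring

lemma klBernoulli_sigmoid_sigmoid (θ η : ℝ) :
    klBernoulli (sigmoid θ) (sigmoid η) = softplus η - softplus θ - (η - θ) * sigmoid θ := by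
  rw [klBernoulli, log_div (sigmoid_pos θ).ne' (sigmoid_pos η).ne',
    log_div (sub_pos.2 (sigmoid_lt_one θ)).ne' (sub_pos.2 (sigmoid_lt_one η)).ne',
    log_sigmoid, log_sigmoid, log_one_sub_sigmoid, log_one_sub_sigmoid]
  ring

lemma sub_le_mul_log_div {x y : ℝ} (hx : 0 < x) (hy : 0 < y) : x - y ≤ x * log (x / y) := by
  have h := one_sub_inv_le_log_of_pos (div_pos hx hy)
  rw [inv_div] at h
  calc x - y = x * (1 - y / x) := by field_simp
    _ ≤ x * log (x / y) := by gcongr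

lemma klBernoulli_nonneg {x y : ℝ} (hx₀ : 0 < x) (hx₁ : x < 1) (hy₀ : 0 < y) (hy₁ : y < 1) :
    0 ≤ klBernoulli x y := by
  have h := sub_le_mul_log_div hx₀ hy₀
  have h' := sub_le_mul_log_div (sub_pos.2 hx₁) (sub_pos.2 hy₁)
  rw [klBernoulli]
  linarith

/-- `-log ∑ p₁ ^ α p₂ ^ (1 - α)` for the Bernoulli laws of natural parameters `θ₁` and `θ₂`. -/
noncomputable def bernoulliChernoff (θ₁ θ₂ α : ℝ) : ℝ :=
  α * softplus θ₁ + (1 - α) * softplus θ₂ - softplus (α * θ₁ + (1 - α) * θ₂)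

lemma bernoulliChernoff_one (θ₁ θ₂ : ℝ) : bernoulliChernoff θ₁ θ₂ 1 = 0 := by
  simp [bernoulliChernoff]

lemma mul_klBernoulli_add_mul_klBernoulli_sigmoid (θ₁ θ₂ α : ℝ) :
    α * klBernoulli (sigmoid (α * θ₁ + (1 - α) * θ₂)) (sigmoid θ₁) +
        (1 - α) * klBernoulli (sigmoid (α * θ₁ + (1 - α) * θ₂)) (sigmoid θ₂) =
      bernoulliChernoff θ₁ θ₂ α := by
  rw [klBernoulli_sigmoid_sigmoid, klBernoulli_sigmoid_sigmoid, bernoulliChernoff]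
  ring

lemma bernoulliChernoff_add_klBernoulli {θ₁ θ₂ β : ℝ}
    (h : klBernoulli (sigmoid (β * θ₁ + (1 - β) * θ₂)) (sigmoid θ₁) =
      klBernoulli (sigmoid (β * θ₁ + (1 - β) * θ₂)) (sigmoid θ₂)) (α : ℝ) :
    bernoulliChernoff θ₁ θ₂ α +
        klBernoulli (sigmoid (β * θ₁ + (1 - β) * θ₂)) (sigmoid (α * θ₁ + (1 - α) * θ₂)) =
      bernoulliChernoff θ₁ θ₂ β := by
  rw [klBernoulli_sigmoid_sigmoid, klBernoulli_sigmoid_sigmoid] at h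
  rw [klBernoulli_sigmoid_sigmoid, bernoulliChernoff, bernoulliChernoff]
  linear_combination (α - β) * h

theorem stmt_15_general (μ₁ μ₂ : ℝ) (h₂ : 0 < μ₂) (h₁ : μ₁ < 1)
    (mstar : ℝ) (hm : mstar ∈ Set.Ioo μ₂ μ₁)
    (heq : klBernoulli mstar μ₁ = klBernoulli mstar μ₂) :
    let θ₁ : ℝ := Real.log (μ₁ / (1 - μ₁))
    let θ₂ : ℝ := Real.log (μ₂ / (1 - μ₂))
    let θstar : ℝ := Real.log (mstar / (1 - mstar))
    let αstar : ℝ := (θstar - θ₂) / (θ₁ - θ₂)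
    let g : ℝ → ℝ := fun α =>
      α * klBernoulli (1 / (1 + Real.exp (-(α * θ₁ + (1 - α) * θ₂)))) μ₁ +
        (1 - α) * klBernoulli (1 / (1 + Real.exp (-(α * θ₁ + (1 - α) * θ₂)))) μ₂
    αstar ∈ Set.Ioo (0 : ℝ) 1 ∧ g αstar = klBernoulli mstar μ₁ ∧
      ∀ α ∈ Set.Icc (0 : ℝ) 1, g α ≤ g αstar := by
  intro θ₁ θ₂ θstar αstar g
  obtain ⟨hm₂, hm₁⟩ := hm
  have hσ₁ : sigmoid θ₁ = μ₁ := sigmoid_log_div_one_sub (by linarith) h₁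
  have hσ₂ : sigmoid θ₂ = μ₂ := sigmoid_log_div_one_sub h₂ (by linarith)
  have hσstar : sigmoid θstar = mstar := sigmoid_log_div_one_sub (by linarith) (by linarith)
  have h₂star : θ₂ < θstar := sigmoid_lt_iff.mp (by rwa [hσ₂, hσstar])
  have hstar₁ : θstar < θ₁ := sigmoid_lt_iff.mp (by rwa [hσstar, hσ₁])
  have hαstar : αstar * θ₁ + (1 - αstar) * θ₂ = θstar := by
    have : θ₁ - θ₂ ≠ 0 := by linarith
    simp only [αstar]
    field_simp
    ring
  have hg (α : ℝ) : g α = bernoulliChernoff θ₁ θ₂ α := by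
    simp only [g, one_div, ← sigmoid_def, ← hσ₁, ← hσ₂]
    exact mul_klBernoulli_add_mul_klBernoulli_sigmoid θ₁ θ₂ α
  rw [← hσstar, ← hσ₁, ← hσ₂, ← hαstar] at heq
  have hkey := bernoulliChernoff_add_klBernoulli heq
  refine ⟨⟨div_pos (by linarith) (by linarith), (div_lt_one (by linarith)).2 (by linarith)⟩,
    ?_, fun α _ => ?_⟩
  · rw [hg, ← hkey 1, bernoulliChernoff_one, zero_add, hαstar, hσstar]
    simp [hσ₁]
  · rw [hg, hg, ← hkey α]
    exact le_add_of_nonneg_right (klBernoulli_nonneg (sigmoid_pos _) (sigmoid_lt_one _)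
      (sigmoid_pos _) (sigmoid_lt_one _))

theorem stmt_15 (μ₁ μ₂ : ℝ) (h₂ : 0 < μ₂) (h₁₂ : μ₂ < μ₁) (h₁ : μ₁ < 1)
    (mstar : ℝ) (hm : mstar ∈ Set.Ioo μ₂ μ₁)
    (heq : klBernoulli mstar μ₁ = klBernoulli mstar μ₂) :
    let θ₁ : ℝ := Real.log (μ₁ / (1 - μ₁))
    let θ₂ : ℝ := Real.log (μ₂ / (1 - μ₂))
    let θstar : ℝ := Real.log (mstar / (1 - mstar))
    let αstar : ℝ := (θstar - θ₂) / (θ₁ - θ₂)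
    let g : ℝ → ℝ := fun α =>
      α * klBernoulli (1 / (1 + Real.exp (-(α * θ₁ + (1 - α) * θ₂)))) μ₁ +
        (1 - α) * klBernoulli (1 / (1 + Real.exp (-(α * θ₁ + (1 - α) * θ₂)))) μ₂
    αstar ∈ Set.Ioo (0 : ℝ) 1 ∧ g αstar = klBernoulli mstar μ₁ ∧
      ∀ α ∈ Set.Icc (0 : ℝ) 1, g α ≤ g αstar :=
  stmt_15_general μ₁ μ₂ h₂ h₁ mstar hm heq
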